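/- Let T₁, T₂ : X → X be maps on a metric space (X, d) possessing global attractors 𝒜₁, 𝒜₂ contained in a set 𝒰 ⊆ X. Assume both T₁ and T₂ have the Lipschitz Shadowing Property on 𝒰 with parameters L, δ₀, and that δ := sup_{x ∈ 𝒰} d(T₁x, T₂x) ≤ δ₀. Then the symmetric Hausdorff distance satisfies dist_H(𝒜₁, 𝒜₂) ≤ L δ. -/
import Mathlib

/-- Shadowing estimate for attractors: if `T1, T2 : X → X` have global attractors
`A1, A2 ⊆ U`, both maps have the Lipschitz Shadowing Property on `U` with parameters
`L, δ₀`, and `dist (T1 x) (T2 x) ≤ δ ≤ δ₀` on `U`, then the symmetric Hausdorff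
distance satisfies `dist_H(A1, A2) ≤ L δ`. -/
theorem stmt9 {X : Type*} [MetricSpace X] (T1 T2 : X → X) (U A1 A2 : Set X)
    (hA1U : A1 ⊆ U) (hA2U : A2 ⊆ U)
    (hA1c : IsCompact A1) (hA2c : IsCompact A2)
    (hA1n : A1.Nonempty) (hA2n : A2.Nonempty)
    -- invariance: every point of the attractor lies on a full trajectory inside it
    (hinv1 : ∀ a ∈ A1, ∃ x : ℤ → X, x 0 = a ∧ (∀ k, x (k+1) = T1 (x k)) ∧ ∀ k, x k ∈ A1)
    (hinv2 : ∀ a ∈ A2, ∃ x : ℤ → X, x 0 = a ∧ (∀ k, x (k+1) = T2 (x k)) ∧ ∀ k, x k ∈ A2)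
    -- maximality: every full bounded trajectory lies in the attractor
    (hmax1 : ∀ x : ℤ → X, (∀ k, x (k+1) = T1 (x k)) →
      Bornology.IsBounded (Set.range x) → ∀ k, x k ∈ A1)
    (hmax2 : ∀ x : ℤ → X, (∀ k, x (k+1) = T2 (x k)) →
      Bornology.IsBounded (Set.range x) → ∀ k, x k ∈ A2)
    (L δ₀ : ℝ) (hL : 0 < L) (hδ₀ : 0 < δ₀)
    -- Lipschitz Shadowing Property of `T1` on `U`
    (hLpSP1 : ∀ δ' : ℝ, 0 < δ' → δ' ≤ δ₀ → ∀ x : ℤ → X, (∀ k, x k ∈ U) →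
      (∀ k, dist (T1 (x k)) (x (k+1)) ≤ δ') →
      ∃ y : ℤ → X, (∀ k, y (k+1) = T1 (y k)) ∧ ∀ k, dist (y k) (x k) ≤ L * δ')
    -- Lipschitz Shadowing Property of `T2` on `U`
    (hLpSP2 : ∀ δ' : ℝ, 0 < δ' → δ' ≤ δ₀ → ∀ x : ℤ → X, (∀ k, x k ∈ U) →
      (∀ k, dist (T2 (x k)) (x (k+1)) ≤ δ') →
      ∃ y : ℤ → X, (∀ k, y (k+1) = T2 (y k)) ∧ ∀ k, dist (y k) (x k) ≤ L * δ')
    (δ : ℝ) (hδpos : 0 < δ) (hδδ₀ : δ ≤ δ₀)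
    (hδ : ∀ x ∈ U, dist (T1 x) (T2 x) ≤ δ) :
    Metric.hausdorffDist A1 A2 ≤ L * δ := by
  have hLδ : (0:ℝ) ≤ L * δ := le_of_lt (mul_pos hL hδpos)
  apply Metric.hausdorffDist_le_of_mem_dist hLδ
  · intro a ha
    obtain ⟨x, hx0, hxT, hxA⟩ := hinv1 a ha
    obtain ⟨y, hyT, hyd⟩ := hLpSP2 δ hδpos hδδ₀ x (fun k => hA1U (hxA k))
      (fun k => by
        rw [hxT k]
        rw [dist_comm]
        exact hδ (x k) (hA1U (hxA k)))
    have hyb : Bornology.IsBounded (Set.range y) := by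
      have : Set.range y ⊆ Metric.cthickening (L * δ) A1 := by
        rintro _ ⟨k, rfl⟩
        exact Metric.mem_cthickening_of_dist_le (y k) (x k) _ _ (hxA k) (hyd k)
      exact (hA1c.isBounded.cthickening).subset this
    refine ⟨y 0, hmax2 y hyT hyb 0, ?_⟩
    rw [dist_comm, ← hx0]; exact hyd 0
  · intro a ha
    obtain ⟨x, hx0, hxT, hxA⟩ := hinv2 a ha
    obtain ⟨y, hyT, hyd⟩ := hLpSP1 δ hδpos hδδ₀ x (fun k => hA2U (hxA k))
      (fun k => by
        rw [hxT k]
        exact hδ (x k) (hA2U (hxA k)))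
    have hyb : Bornology.IsBounded (Set.range y) := by
      have : Set.range y ⊆ Metric.cthickening (L * δ) A2 := by
        rintro _ ⟨k, rfl⟩
        exact Metric.mem_cthickening_of_dist_le (y k) (x k) _ _ (hxA k) (hyd k)
      exact (hA2c.isBounded.cthickening).subset this
    refine ⟨y 0, hmax1 y hyT hyb 0, ?_⟩
    rw [dist_comm, ← hx0]; exact hyd 0
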